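/- arXiv:1809.01965 — 6 statements merged into one kernel-verified Lean document; each statement's English description precedes it below -/
import Mathlib

section
/- Let H be a real Hilbert space, U a Hilbert space, K ⊆ U convex, S : U → H affine with continuous linear part, y_d ∈ H. Suppose u ∈ K satisfies S(u) ≠ y_d. Then u minimizes f(u') = ‖S(u') − y_d‖ over K if and only if ⟨S(u) − y_d, L(u' − u)⟩ ≥ 0 for all u' ∈ K, where L is the linear part of S. -/
open Set

/-- First-order necessary and sufficient optimality condition for the convex
minimal distance problem: for `S u = S₀ + L u` affine with `L` continuous linear,
`u ∈ K` with `S u ≠ y_d`, `u` minimizes `u' ↦ ‖S u' - y_d‖` over the convex set `K`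
iff `⟨S u - y_d, L (u' - u)⟩ ≥ 0` for all `u' ∈ K`. -/
theorem minimal_distance_variational_inequality
    {U H : Type*} [NormedAddCommGroup U] [InnerProductSpace ℝ U]
    [NormedAddCommGroup H] [InnerProductSpace ℝ H] [CompleteSpace H]
    (K : Set U) (hK : Convex ℝ K)
    (S₀ : H) (L : U →L[ℝ] H) (S : U → H) (hS : ∀ u, S u = S₀ + L u)
    (y_d : H) (u : U) (hu : u ∈ K) (hne : S u ≠ y_d) :
    IsMinOn (fun u' => ‖S u' - y_d‖) K u ↔
      ∀ u' ∈ K, (0 : ℝ) ≤ inner ℝ (S u - y_d) (L (u' - u)) := by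
  set a : H := S u - y_d with ha
  have ha0 : a ≠ 0 := sub_ne_zero.2 hne
  have hanorm : (0:ℝ) < ‖a‖ := norm_pos_iff.2 ha0
  have key : ∀ u', S u' - y_d = a + L (u' - u) := by
    intro u'
    rw [ha, hS, hS, map_sub]
    abel
  constructor
  · intro hmin u' hu'
    by_contra hlt
    push_neg at hlt
    set b : H := L (u' - u) with hb
    set c : ℝ := inner ℝ a b with hc
    have hcneg : c < 0 := hlt
    have hbne : b ≠ 0 := by
      intro h
      rw [h] at hc
      simp [inner_zero_right] at hc
      rw [hc] at hcneg
      exact lt_irrefl 0 hcneg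
    have hb2 : (0:ℝ) < ‖b‖^2 := pow_pos (norm_pos_iff.2 hbne) 2
    set t : ℝ := min 1 (-c / ‖b‖^2) with htdef
    have ht0 : 0 < t := lt_min one_pos (div_pos (neg_pos.2 hcneg) hb2)
    have ht1 : t ≤ 1 := min_le_left _ _
    have htc : t * ‖b‖^2 ≤ -c := by
      have : t ≤ -c / ‖b‖^2 := min_le_right _ _
      calc t * ‖b‖^2 ≤ (-c / ‖b‖^2) * ‖b‖^2 := by nlinarith
        _ = -c := by field_simp
    have hmem : u + t • (u' - u) ∈ K := by
      have h1 : (1 - t) • u + t • u' ∈ K :=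
        hK hu hu' (by linarith) (le_of_lt ht0) (by ring)
      have : u + t • (u' - u) = (1 - t) • u + t • u' := by
        rw [smul_sub, sub_smul, one_smul]; abel
      rw [this]; exact h1
    have hle : ‖a‖ ≤ ‖a + t • b‖ := by
      have h2 : ‖S u - y_d‖ ≤ ‖S (u + t • (u' - u)) - y_d‖ := hmin hmem
      have e2 : (u + t • (u' - u)) - u = t • (u' - u) := by abel
      rw [key, key, e2, map_smul, sub_self, map_zero, add_zero] at h2
      exact h2
    have hsq : ‖a‖^2 ≤ ‖a + t • b‖^2 := by nlinarith [norm_nonneg (a + t • b)]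
    have hexp : ‖a + t • b‖^2 = ‖a‖^2 + 2 * (t * c) + t^2 * ‖b‖^2 := by
      rw [norm_add_sq_real, real_inner_smul_right, norm_smul, Real.norm_eq_abs,
        abs_of_pos ht0, mul_pow]
    nlinarith
  · intro h u' hu'
    have hnn := h u' hu'
    have hCS : (inner ℝ a (S u' - y_d) : ℝ) ≤ ‖a‖ * ‖S u' - y_d‖ :=
      real_inner_le_norm _ _
    have hin : ‖a‖^2 ≤ (inner ℝ a (S u' - y_d) : ℝ) := by
      rw [key, inner_add_right, real_inner_self_eq_norm_sq]
      linarith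
    have : ‖a‖^2 ≤ ‖a‖ * ‖S u' - y_d‖ := le_trans hin hCS
    have : ‖a‖ ≤ ‖S u' - y_d‖ := by nlinarith
    simpa using this
end

section
/- Let (X, μ) be a finite measure space, g : X → ℝ measurable, and suppose there exists C > 0 such that μ({x : |g(x)| ≤ ε}) ≤ Cε for all ε > 0. Let u_a, u_b ∈ L∞(X) with u_a ≤ u_b, and let ū ∈ K = {u : u_a ≤ u ≤ u_b a.e.} satisfy ū = u_a on {g > 0} and ū = u_b on {g < 0}. Then for all u ∈ K: ∫ g (u − ū) dμ ≥ c₀ ‖u − ū‖²_{L¹(X)} with c₀ = (2‖u_b − u_a‖_{L∞} C)⁻¹. -/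
open Set MeasureTheory
open scoped ENNReal NNReal
open Filter

/-- Quadratic growth in `L¹` under the structural measure condition on the
level sets of `g`: if `μ{|g| ≤ ε} ≤ Cε` for all `ε > 0` and `ū` is the bang-bang control
associated with `g` (`ū = u_a` on `{g > 0}`, `ū = u_b` on `{g < 0}`), then
`∫ g (u - ū) ≥ c₀ ‖u - ū‖²_{L¹}` for all admissible `u`, with
`c₀ = (2 ‖u_b - u_a‖_{L∞} C)⁻¹`. -/
theorem quadratic_growth_L1
    {X : Type*} [MeasurableSpace X] (μ : Measure X) [IsFiniteMeasure μ]
    (g u_a u_b ubar : X → ℝ) (C : ℝ) (hC : 0 < C)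
    (hgmeas : Measurable g)
    (hg : Integrable g μ)
    (hlevel : ∀ ε : ℝ, 0 < ε → (μ {x | |g x| ≤ ε}).toReal ≤ C * ε)
    (hab : u_a ≤ᵐ[μ] u_b)
    (habL : MemLp (fun x => u_b x - u_a x) ⊤ μ)
    (hubar : ubar ∈ {v : X → ℝ | AEStronglyMeasurable v μ ∧ u_a ≤ᵐ[μ] v ∧ v ≤ᵐ[μ] u_b})
    (hba : ∀ᵐ x ∂μ, 0 < g x → ubar x = u_a x)
    (hbb : ∀ᵐ x ∂μ, g x < 0 → ubar x = u_b x) :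
    ∀ u ∈ {v : X → ℝ | AEStronglyMeasurable v μ ∧ u_a ≤ᵐ[μ] v ∧ v ≤ᵐ[μ] u_b},
      (2 * (eLpNorm (fun x => u_b x - u_a x) ⊤ μ).toReal * C)⁻¹ *
          (∫ x, |u x - ubar x| ∂μ) ^ 2 ≤
        ∫ x, g x * (u x - ubar x) ∂μ := by
  rintro u ⟨hu_meas, hua, hub⟩
  obtain ⟨hubar_meas, hbara, hbarb⟩ := hubar
  set M : ℝ := (eLpNorm (fun x => u_b x - u_a x) ⊤ μ).toReal with hMdef
  set d : X → ℝ := fun x => u x - ubar x with hddef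
  have hd_meas : AEStronglyMeasurable d μ := hu_meas.sub hubar_meas
  have hdabs_meas : AEStronglyMeasurable (fun x => |d x|) μ := by
    simpa [Real.norm_eq_abs] using hd_meas.norm
  show (2 * M * C)⁻¹ * (∫ x, |d x| ∂μ) ^ 2 ≤ ∫ x, g x * d x ∂μ
  have hM0 : 0 ≤ M := ENNReal.toReal_nonneg
  -- a.e. bound |d| ≤ M
  have h_bd : ∀ᵐ x ∂μ, |d x| ≤ M := by
    have h1 : ∀ᵐ x ∂μ, ‖u_b x - u_a x‖ ≤ M := by
      have := ae_le_eLpNormEssSup (f := fun x => u_b x - u_a x) (μ := μ)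
      filter_upwards [this] with x hx
      have hfin : eLpNormEssSup (fun x => u_b x - u_a x) μ ≠ ⊤ := by
        rw [← eLpNorm_exponent_top]
        exact habL.2.ne
      have : ((‖u_b x - u_a x‖₊ : ℝ≥0∞)).toReal ≤ M := by
        rw [hMdef, eLpNorm_exponent_top]
        exact ENNReal.toReal_mono hfin hx
      simpa using this
    filter_upwards [h1, hua, hub, hbara, hbarb] with x h1 h2 h3 h4 h5
    rw [abs_le]
    constructor
    · have : -(u_b x - u_a x) ≤ d x := by simp only [hddef]; linarith
      have h6 : u_b x - u_a x ≤ ‖u_b x - u_a x‖ := le_abs_self _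
      linarith
    · have : d x ≤ u_b x - u_a x := by simp only [hddef]; linarith
      have h6 : u_b x - u_a x ≤ ‖u_b x - u_a x‖ := le_abs_self _
      linarith
  -- a.e. sign condition
  have h_eq : ∀ᵐ x ∂μ, g x * d x = |g x| * |d x| := by
    filter_upwards [hba, hbb, hua, hub] with x h1 h2 h3 h4
    rcases lt_trichotomy (g x) 0 with hg0 | hg0 | hg0
    · have hd0 : d x ≤ 0 := by simp only [hddef]; rw [h2 hg0]; linarith
      rw [abs_of_neg hg0, abs_of_nonpos hd0]; ring
    · simp [hg0]
    · have hd0 : 0 ≤ d x := by simp only [hddef]; rw [h1 hg0]; linarith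
      rw [abs_of_pos hg0, abs_of_nonneg hd0]
  -- integrability facts
  have hd_int : Integrable d μ :=
    Integrable.mono' (integrable_const M) hd_meas (by filter_upwards [h_bd] with x hx; simpa using hx)
  have habs_int : Integrable (fun x => |d x|) μ := hd_int.abs
  set N : ℝ := ∫ x, |d x| ∂μ with hNdef
  have hN0 : 0 ≤ N := integral_nonneg fun x => abs_nonneg _
  have hgd_meas : AEStronglyMeasurable (fun x => |g x| * |d x|) μ :=
    hgmeas.abs.aestronglyMeasurable.mul hdabs_meas
  have hgd_int : Integrable (fun x => |g x| * |d x|) μ := by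
    refine Integrable.mono' (hg.abs.const_mul M) hgd_meas ?_
    filter_upwards [h_bd] with x hx
    have : |g x| * |d x| ≤ |g x| * M := by
      apply mul_le_mul_of_nonneg_left hx (abs_nonneg _)
    simpa [abs_mul, abs_abs, mul_comm] using this
  have h_int_eq : ∫ x, g x * d x ∂μ = ∫ x, |g x| * |d x| ∂μ := integral_congr_ae h_eq
  have h_int_nonneg : 0 ≤ ∫ x, g x * d x ∂μ := by
    rw [h_int_eq]
    exact integral_nonneg fun x => mul_nonneg (abs_nonneg _) (abs_nonneg _)
  -- trivial cases
  rcases hM0.eq_or_lt with hM | hM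
  · rw [← hM]
    simpa using h_int_nonneg
  rcases hN0.eq_or_lt with hN | hN
  · rw [← hN]
    simpa using h_int_nonneg
  -- main case
  set ε : ℝ := N / (M * C) with hεdef
  have hε : 0 < ε := div_pos hN (mul_pos hM hC)
  set ψ : X → ℝ := fun x => max (ε - |g x|) 0 with hψdef
  have hψ_nn : ∀ x, 0 ≤ ψ x := fun x => le_max_right _ _
  have hψ_le : ∀ x, ψ x ≤ ε := fun x => by
    simp only [hψdef, max_le_iff]
    constructor
    · have := abs_nonneg (g x); linarith
    · exact hε.le
  have hψ_meas : Measurable ψ := (measurable_const.sub hgmeas.abs).max measurable_const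
  have hψ_int : Integrable ψ μ := by
    refine Integrable.mono' (integrable_const ε) hψ_meas.aestronglyMeasurable ?_
    exact Eventually.of_forall fun x => by
      rw [Real.norm_of_nonneg (hψ_nn x)]; exact hψ_le x
  -- layer cake bound : ∫ ψ ≤ C ε² / 2
  have hψ_bound : ∫ x, ψ x ∂μ ≤ C * ε ^ 2 / 2 := by
    rw [hψ_int.integral_eq_integral_Ioc_meas_le (Eventually.of_forall hψ_nn)
        (Eventually.of_forall hψ_le)]
    rw [integral_Ioc_eq_integral_Ioo]
    have hmono : Antitone (fun t : ℝ => (μ {a | t ≤ ψ a}).toReal) := by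
      intro s t hst
      exact ENNReal.toReal_mono (measure_ne_top μ _)
        (measure_mono fun a ha => le_trans hst ha)
    have h_int1 : IntegrableOn (fun t : ℝ => (μ {a | t ≤ ψ a}).toReal) (Ioo 0 ε) := by
      refine Integrable.mono' ((integrableOn_const_iff (C := (μ Set.univ).toReal)).2 (Or.inr measure_Ioo_lt_top))
        hmono.measurable.aestronglyMeasurable ?_
      exact Eventually.of_forall fun t => by
        rw [Real.norm_of_nonneg ENNReal.toReal_nonneg]
        exact ENNReal.toReal_mono (measure_ne_top μ _) (measure_mono (subset_univ _))
    have h_int2 : IntegrableOn (fun t : ℝ => C * (ε - t)) (Ioo 0 ε) :=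
      ((by continuity : Continuous fun t : ℝ => C * (ε - t)).integrableOn_Icc.mono_set Ioo_subset_Icc_self)
    have hle : ∀ t ∈ Ioo (0:ℝ) ε, (μ {a | t ≤ ψ a}).toReal ≤ C * (ε - t) := by
      intro t ht
      have hsub : {a | t ≤ ψ a} ⊆ {a | |g a| ≤ ε - t} := by
        intro a ha
        simp only [mem_setOf_eq] at ha ⊢
        rcases le_max_iff.mp ha with h | h
        · linarith
        · exact absurd h (not_le.mpr ht.1)
      calc (μ {a | t ≤ ψ a}).toReal ≤ (μ {a | |g a| ≤ ε - t}).toReal :=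
            ENNReal.toReal_mono (measure_ne_top μ _) (measure_mono hsub)
        _ ≤ C * (ε - t) := hlevel (ε - t) (by linarith [ht.2])
    calc ∫ t in Ioo (0:ℝ) ε, (μ {a | t ≤ ψ a}).toReal
        ≤ ∫ t in Ioo (0:ℝ) ε, C * (ε - t) :=
          setIntegral_mono_on h_int1 h_int2 measurableSet_Ioo hle
      _ = C * ε ^ 2 / 2 := by
          rw [← integral_Ioc_eq_integral_Ioo, ← intervalIntegral.integral_of_le hε.le,
            intervalIntegral.integral_const_mul]
          have hcomp : (∫ t in (0:ℝ)..ε, (ε - t)) = ε ^ 2 / 2 := by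
            open intervalIntegral in
              rw [integral_sub intervalIntegrable_const intervalIntegrable_id, integral_id,
                intervalIntegral.integral_const]
            simp only [smul_eq_mul]
            ring
          rw [hcomp]
          ring
  -- min(|g|,ε) = ε - ψ
  have hmin : ∀ x, min (|g x|) ε = ε - ψ x := by
    intro x
    rcases le_total (|g x|) ε with h | h
    · rw [min_eq_left h, hψdef]
      simp only
      rw [max_eq_left (by linarith)]; ring
    · rw [min_eq_right h, hψdef]
      simp only
      rw [max_eq_right (by linarith)]; ring
  -- integrability of pieces
  have hψd_int : Integrable (fun x => ψ x * |d x|) μ := by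
    refine Integrable.mono' (habs_int.const_mul ε) (hψ_meas.aestronglyMeasurable.mul hdabs_meas) ?_
    exact Eventually.of_forall fun x => by
      rw [Real.norm_of_nonneg (mul_nonneg (hψ_nn x) (abs_nonneg _))]
      exact mul_le_mul_of_nonneg_right (hψ_le x) (abs_nonneg _)
  -- key chain
  have hsub_int : Integrable (fun x => (ε - ψ x) * |d x|) μ := by
    have : (fun x => (ε - ψ x) * |d x|) = fun x => ε * |d x| - ψ x * |d x| := by
      funext x; ring
    rw [this]
    exact (habs_int.const_mul ε).sub hψd_int
  have step1 : ∫ x, (ε - ψ x) * |d x| ∂μ ≤ ∫ x, |g x| * |d x| ∂μ := by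
    refine integral_mono_ae hsub_int hgd_int (Eventually.of_forall fun x => ?_)
    show (ε - ψ x) * |d x| ≤ |g x| * |d x|
    rw [← hmin x]
    exact mul_le_mul_of_nonneg_right (min_le_left _ _) (abs_nonneg _)
  have step2 : ∫ x, (ε - ψ x) * |d x| ∂μ = ε * N - ∫ x, ψ x * |d x| ∂μ := by
    have : (fun x => (ε - ψ x) * |d x|) = fun x => ε * |d x| - ψ x * |d x| := by
      funext x; ring
    rw [this, integral_sub (habs_int.const_mul ε) hψd_int, integral_const_mul]
  have step3 : ∫ x, ψ x * |d x| ∂μ ≤ M * ∫ x, ψ x ∂μ := by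
    rw [← integral_const_mul]
    apply integral_mono_ae hψd_int (hψ_int.const_mul M)
    filter_upwards [h_bd] with x hx
    calc ψ x * |d x| ≤ ψ x * M := mul_le_mul_of_nonneg_left hx (hψ_nn x)
      _ = M * ψ x := mul_comm _ _
  have step4 : M * ∫ x, ψ x ∂μ ≤ M * (C * ε ^ 2 / 2) :=
    mul_le_mul_of_nonneg_left hψ_bound hM0
  have main : ε * N - M * (C * ε ^ 2 / 2) ≤ ∫ x, g x * d x ∂μ := by
    rw [h_int_eq]
    linarith
  have harith : (2 * M * C)⁻¹ * N ^ 2 = ε * N - M * (C * ε ^ 2 / 2) := by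
    rw [hεdef]
    field_simp
    ring
  calc (2 * M * C)⁻¹ * N ^ 2 = ε * N - M * (C * ε ^ 2 / 2) := harith
    _ ≤ ∫ x, g x * d x ∂μ := main
end

section
/- Let h : ℝⁿ → ℝ be convex and differentiable, Δ ⊆ ℝⁿ the probability simplex, Π the Euclidean projection onto Δ, c > 0, and define the normal map G(η) = c(η − Π(η)) + ∇h(Π(η)). Then λ* ∈ Δ minimizes h over Δ if and only if there exists η ∈ ℝⁿ with G(η) = 0 and λ* = Π(η). -/
open Set

section aux

variable {n : ℕ}

local notation "E" => EuclideanSpace ℝ (Fin n)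

/-- directional derivative along a line from gradient -/
lemma aux_line_deriv (h : E → ℝ) (g x d : E) (hg : HasGradientAt h g x) :
    HasDerivAt (fun t : ℝ => h (x + t • d)) (inner ℝ g d : ℝ) 0 := by
  have hf : HasFDerivAt h (InnerProductSpace.toDual ℝ _ g).toContinuousLinearMap x :=
    hg.hasFDerivAt
  have hline : HasDerivAt (fun t : ℝ => x + t • d) d 0 := by
    simpa using ((hasDerivAt_id (0:ℝ)).smul_const d).const_add x
  have := hf.comp_hasDerivAt_of_eq (0:ℝ) hline (by simp)
  simpa [Function.comp_def] using this

/-- convex gradient inequality -/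
lemma aux_grad_ineq (h : E → ℝ) (hconv : ConvexOn ℝ Set.univ h)
    (g x y : E) (hg : HasGradientAt h g x) :
    h x + inner ℝ g (y - x) ≤ h y := by
  have hder := aux_line_deriv h g x (y - x) hg
  have key : Filter.Tendsto (fun t : ℝ => (h (x + t • (y - x)) - h x) / t)
      (nhdsWithin 0 (Set.Ioi 0)) (nhds (inner ℝ g (y - x) : ℝ)) := by
    have := hder.tendsto_slope_zero_right
    simpa [slope_def_field, div_eq_inv_mul] using this
  have hev : ∀ᶠ t : ℝ in nhdsWithin 0 (Set.Ioi 0),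
      (h (x + t • (y - x)) - h x) / t ≤ h y - h x := by
    filter_upwards [Ioo_mem_nhdsGT_of_mem (by norm_num : (0:ℝ) ∈ Set.Ico 0 1)] with t ht
    obtain ⟨ht0, ht1⟩ := ht
    have hcomb : h (x + t • (y - x)) ≤ (1 - t) * h x + t * h y := by
      have := hconv.2 (Set.mem_univ x) (Set.mem_univ y)
        (by linarith : (0:ℝ) ≤ 1 - t) (le_of_lt ht0) (by ring)
      have heq : (1 - t) • x + t • y = x + t • (y - x) := by
        module
      rw [heq] at this
      simpa using this
    rw [div_le_iff₀ ht0]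
    nlinarith
  have := le_of_tendsto key hev
  linarith

/-- min implies nonneg directional derivative -/
lemma aux_min_grad (h : E → ℝ) (g : E) (Δ : Set E) (hΔc : Convex ℝ Δ)
    (lam : E) (hlam : lam ∈ Δ) (hg : HasGradientAt h g lam)
    (hmin : IsMinOn h Δ lam) : ∀ z ∈ Δ, (0:ℝ) ≤ inner ℝ g (z - lam) := by
  intro z hz
  have hder := aux_line_deriv h g lam (z - lam) hg
  have key : Filter.Tendsto (fun t : ℝ => (h (lam + t • (z - lam)) - h lam) / t)
      (nhdsWithin 0 (Set.Ioi 0)) (nhds (inner ℝ g (z - lam) : ℝ)) := by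
    have := hder.tendsto_slope_zero_right
    simpa [slope_def_field, div_eq_inv_mul] using this
  have hev : ∀ᶠ t : ℝ in nhdsWithin 0 (Set.Ioi 0),
      (0:ℝ) ≤ (h (lam + t • (z - lam)) - h lam) / t := by
    filter_upwards [Ioo_mem_nhdsGT_of_mem (by norm_num : (0:ℝ) ∈ Set.Ico 0 1)] with t ht
    obtain ⟨ht0, ht1⟩ := ht
    have hmem : lam + t • (z - lam) ∈ Δ := by
      have := hΔc hlam hz (by linarith : (0:ℝ) ≤ 1 - t) (le_of_lt ht0) (by ring)
      have heq : (1 - t) • lam + t • z = lam + t • (z - lam) := by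
        module
      rwa [heq] at this
    have hle : h lam ≤ h (lam + t • (z - lam)) := hmin hmem
    exact div_nonneg (by linarith) ht0.le
  exact ge_of_tendsto key hev

/-- variational inequality for the projection -/
lemma aux_proj_vi (Δ : Set E) (hΔc : Convex ℝ Δ) (P : E → E)
    (hP : ∀ η, P η ∈ Δ ∧ ∀ z ∈ Δ, ‖η - P η‖ ≤ ‖η - z‖) (η : E) :
    ∀ z ∈ Δ, (inner ℝ (η - P η) (z - P η) : ℝ) ≤ 0 := by
  haveI : Nonempty ↑Δ := ⟨⟨P (0:E), (hP 0).1⟩⟩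
  have hinf : ‖η - P η‖ = ⨅ w : Δ, ‖η - w‖ := by
    refine le_antisymm (le_ciInf fun w => (hP η).2 w w.2) ?_
    exact ciInf_le ⟨0, fun r ⟨w, hw⟩ => hw ▸ norm_nonneg _⟩ (⟨P η, (hP η).1⟩ : Δ)
  exact (norm_eq_iInf_iff_real_inner_le_zero hΔc (hP η).1).mp hinf

end aux

/-- Robinson's normal map characterization. Let `h : ℝⁿ → ℝ` be convex and
differentiable with gradient `∇h`, `Δ` the probability simplex, `P` the Euclidean
projection onto `Δ`, and `c > 0`. Then `λ*` minimizes `h` over `Δ` iff there is `η` with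
`c(η - P η) + ∇h(P η) = 0` and `λ* = P η`. -/
theorem normal_map_characterization
    (n : ℕ) (h : EuclideanSpace ℝ (Fin n) → ℝ)
    (hconv : ConvexOn ℝ Set.univ h)
    (gradh : EuclideanSpace ℝ (Fin n) → EuclideanSpace ℝ (Fin n))
    (hdiff : ∀ x, HasGradientAt h (gradh x) x)
    (Δ : Set (EuclideanSpace ℝ (Fin n)))
    (hΔ : Δ = {x | (∀ i, 0 ≤ x i) ∧ ∑ i, x i = 1})
    (P : EuclideanSpace ℝ (Fin n) → EuclideanSpace ℝ (Fin n))
    (hP : ∀ η, P η ∈ Δ ∧ ∀ z ∈ Δ, ‖η - P η‖ ≤ ‖η - z‖)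
    (c : ℝ) (hc : 0 < c) (lam : EuclideanSpace ℝ (Fin n)) (hlam : lam ∈ Δ) :
    IsMinOn h Δ lam ↔
      ∃ η, c • (η - P η) + gradh (P η) = 0 ∧ lam = P η := by
  have hΔc : Convex ℝ Δ := by
    subst hΔ
    intro x hx y hy a b ha hb hab
    refine ⟨fun i => ?_, ?_⟩
    · have : (a • x + b • y) i = a * x i + b * y i := by simp
      rw [this]
      exact add_nonneg (mul_nonneg ha (hx.1 i)) (mul_nonneg hb (hy.1 i))
    · have : ∀ i, (a • x + b • y) i = a * x i + b * y i := fun i => by simp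
      simp only [this]
      rw [Finset.sum_add_distrib, ← Finset.mul_sum, ← Finset.mul_sum, hx.2, hy.2]
      simpa using hab
  constructor
  · intro hmin
    set g := gradh lam with hgdef
    set η := lam - (c⁻¹) • g with hηdef
    have hgi : ∀ z ∈ Δ, (0:ℝ) ≤ inner ℝ g (z - lam) :=
      aux_min_grad h g Δ hΔc lam hlam (hdiff lam) hmin
    have hvi2 : ∀ z ∈ Δ, (inner ℝ (η - lam) (z - lam) : ℝ) ≤ 0 := by
      intro z hz
      have : η - lam = (-(c⁻¹)) • g := by rw [hηdef]; module
      rw [this, real_inner_smul_left]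
      have h1 := hgi z hz
      have h2 : (0:ℝ) < c⁻¹ := inv_pos.mpr hc
      nlinarith
    have hPη : P η = lam := by
      have hA : (inner ℝ (η - P η) (lam - P η) : ℝ) ≤ 0 :=
        aux_proj_vi Δ hΔc P hP η lam hlam
      have hB : (inner ℝ (η - lam) (P η - lam) : ℝ) ≤ 0 := hvi2 (P η) (hP η).1
      have hkey : (inner ℝ (lam - P η) (lam - P η) : ℝ) ≤ 0 := by
        have e1 : lam - P η = (η - P η) - (η - lam) := by module
        have e : (inner ℝ (lam - P η) (lam - P η) : ℝ)
            = inner ℝ (η - P η) (lam - P η) - inner ℝ (η - lam) (lam - P η) := by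
          nth_rewrite 1 [e1]
          exact inner_sub_left _ _ _
        have e2 : (inner ℝ (η - lam) (lam - P η) : ℝ) = - inner ℝ (η - lam) (P η - lam) := by
          have e3 : lam - P η = -(P η - lam) := by module
          rw [e3, inner_neg_right]
        linarith
      have : lam - P η = 0 := by
        have := real_inner_self_nonpos.mp hkey
        exact this
      have := sub_eq_zero.mp this
      exact this.symm
    refine ⟨η, ?_, hPη.symm⟩
    rw [hPη, ← hgdef, hηdef]
    have : c • ((lam - c⁻¹ • g) - lam) = -g := by
      rw [smul_sub, smul_sub, smul_smul, mul_inv_cancel₀ (ne_of_gt hc)]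
      module
    rw [this]; module
  · rintro ⟨η, hG, rfl⟩
    intro z hz
    have hvi := aux_proj_vi Δ hΔc P hP η z hz
    have hgrad := aux_grad_ineq h hconv (gradh (P η)) (P η) z (hdiff (P η))
    -- gradh (P η) = -c • (η - P η)
    have hge : gradh (P η) = (-c) • (η - P η) := by
      have : gradh (P η) = -(c • (η - P η)) := by
        have := hG; linear_combination (norm := module) this
      rw [this, neg_smul]
    have : (0:ℝ) ≤ inner ℝ (gradh (P η)) (z - P η) := by
      rw [hge, real_inner_smul_left]
      nlinarith
    simp only [Set.mem_setOf_eq]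
    calc h (P η) ≤ h (P η) + inner ℝ (gradh (P η)) (z - P η) := by linarith
      _ ≤ h z := hgrad
end

section
/- Let y ∈ ℝⁿ with sorted permutation y_{π(1)} ≥ ... ≥ y_{π(n)}. Let ρ = max{1 ≤ j ≤ n : y_{π(j)} + (1/j)(1 − Σ_{i=1}^{j} y_{π(i)}) > 0} and λ = (1/ρ)(1 − Σ_{i=1}^{ρ} y_{π(i)}). Then the vector x with xᵢ = max{yᵢ + λ, 0} is the Euclidean projection of y onto the probability simplex Δ = {x ∈ ℝⁿ : xᵢ ≥ 0, Σxᵢ = 1}. -/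
open Set Finset
open scoped RealInnerProductSpace

/-- Correctness of the sorting-based projection onto the probability
simplex. Given `y ∈ ℝⁿ` sorted decreasingly via the permutation `π` (recorded in the
sequence `yσ`), with `ρ` the largest index `j ∈ [1,n]` such that
`yσ(j-1) + (1/j)(1 - Σ_{i<j} yσ i) > 0` and `λ = (1/ρ)(1 - Σ_{i<ρ} yσ i)`, the vector
`x` with `xᵢ = max (yᵢ + λ) 0` is the Euclidean projection of `y` onto the simplex. -/
theorem simplex_projection_formula
    (n : ℕ) (hn : 0 < n)
    (y x : EuclideanSpace ℝ (Fin n)) (π : Equiv.Perm (Fin n))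
    (yσ : ℕ → ℝ) (hyσ : ∀ i : Fin n, yσ i = y (π i))
    (hsorted : ∀ i j : Fin n, i ≤ j → y (π j) ≤ y (π i))
    (ρ : ℕ)
    (hρmem : ρ ∈ Finset.Icc 1 n ∧
      0 < yσ (ρ - 1) + (1 - ∑ i ∈ Finset.range ρ, yσ i) / ρ)
    (hρmax : ∀ j ∈ Finset.Icc 1 n,
      0 < yσ (j - 1) + (1 - ∑ i ∈ Finset.range j, yσ i) / j → j ≤ ρ)
    (lam : ℝ) (hlam : lam = (1 - ∑ i ∈ Finset.range ρ, yσ i) / ρ)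
    (hx : ∀ i, x i = max (y i + lam) 0) :
    ((∀ i, 0 ≤ x i) ∧ ∑ i, x i = 1) ∧
      ∀ z : EuclideanSpace ℝ (Fin n),
        ((∀ i, 0 ≤ z i) ∧ ∑ i, z i = 1) → ‖x - y‖ ≤ ‖z - y‖ := by
  obtain ⟨hρIcc, hρpos⟩ := hρmem
  rw [Finset.mem_Icc] at hρIcc
  obtain ⟨hρ1, hρn⟩ := hρIcc
  set S : ℝ := ∑ i ∈ Finset.range ρ, yσ i with hS
  have hρR : (0:ℝ) < (ρ:ℝ) := by exact_mod_cast hρ1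
  -- monotonicity of yσ on [0, n)
  have mono : ∀ a b : ℕ, a ≤ b → b < n → yσ b ≤ yσ a := by
    intro a b hab hbn
    have han : a < n := lt_of_le_of_lt hab hbn
    have := hsorted ⟨a, han⟩ ⟨b, hbn⟩ hab
    rw [← hyσ ⟨a, han⟩, ← hyσ ⟨b, hbn⟩] at this
    exact this
  -- entries with sorted index < ρ are positive after shift
  have key1 : ∀ j : ℕ, j < ρ → 0 < yσ j + lam := by
    intro j hj
    have hj' : j ≤ ρ - 1 := Nat.le_sub_one_of_lt hj
    have hρ1n : ρ - 1 < n := lt_of_lt_of_le (Nat.sub_lt (lt_of_le_of_lt (Nat.zero_le _) hj) one_pos) hρn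
    have := mono j (ρ - 1) hj' hρ1n
    have h2 : 0 < yσ (ρ - 1) + lam := by rw [hlam]; exact hρpos
    linarith
  -- entries with sorted index ≥ ρ are nonpositive after shift
  have key2 : ∀ j : ℕ, ρ ≤ j → j < n → yσ j + lam ≤ 0 := by
    intro j hρj hjn
    have hρn' : ρ < n := lt_of_le_of_lt hρj hjn
    have hρstep : yσ ρ + lam ≤ 0 := by
      by_contra h
      push_neg at h
      have hmem : ρ + 1 ∈ Finset.Icc 1 n := by
        rw [Finset.mem_Icc]; omega
      have hsum : ∑ i ∈ Finset.range (ρ + 1), yσ i = S + yσ ρ := by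
        rw [Finset.sum_range_succ]
      have hfpos : 0 < yσ (ρ + 1 - 1) + (1 - ∑ i ∈ Finset.range (ρ+1), yσ i) / ((ρ:ℝ)+1) := by
        simp only [Nat.add_sub_cancel, hsum]
        have h2 : (S - 1)/(ρ:ℝ) < yσ ρ := by
          rw [hlam] at h
          have h3 : -((1-S)/(ρ:ℝ)) < yσ ρ := by linarith
          calc (S - 1)/(ρ:ℝ) = -((1-S)/(ρ:ℝ)) := by ring
          _ < yσ ρ := h3
        have h1 : S - 1 < yσ ρ * ρ := (div_lt_iff₀ hρR).mp h2
        have hρ1R : (0:ℝ) < (ρ:ℝ)+1 := by positivity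
        have hnum : 0 < yσ ρ * ((ρ:ℝ)+1) + (1 - (S + yσ ρ)) := by nlinarith
        have hd := div_pos hnum hρ1R
        have heq : yσ ρ + (1 - (S + yσ ρ)) / ((ρ:ℝ)+1)
            = (yσ ρ * ((ρ:ℝ)+1) + (1 - (S + yσ ρ)))/((ρ:ℝ)+1) := by
          field_simp
        rw [heq]; exact hd
      have hfpos' : 0 < yσ (ρ + 1 - 1) + (1 - ∑ i ∈ Finset.range (ρ+1), yσ i) / ((ρ+1 : ℕ) : ℝ) := by
        push_cast; exact hfpos
      have := hρmax (ρ + 1) hmem hfpos'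
      omega
    have := mono ρ j hρj hjn
    linarith
  -- x i ≥ 0
  have hxnn : ∀ i, 0 ≤ x i := fun i => by rw [hx]; exact le_max_right _ _
  -- sum of x = 1
  have hS1 : S + (ρ:ℝ) * lam = 1 := by
    rw [hlam]; field_simp; ring
  have hsum1 : ∑ i, x i = 1 := by
    have h1 : ∑ i : Fin n, x i = ∑ i : Fin n, x (π i) :=
      (Equiv.sum_comp π x).symm
    have h2 : ∀ i : Fin n, x (π i) = max (yσ i + lam) 0 := by
      intro i; rw [hx, hyσ]
    rw [h1]
    simp_rw [h2]
    rw [Fin.sum_univ_eq_sum_range (fun i => max (yσ i + lam) 0) n]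
    rw [← Finset.sum_range_add_sum_Ico _ hρn]
    have hA : ∑ i ∈ Finset.range ρ, max (yσ i + lam) 0
        = ∑ i ∈ Finset.range ρ, (yσ i + lam) := by
      apply Finset.sum_congr rfl
      intro i hi
      rw [Finset.mem_range] at hi
      exact max_eq_left (le_of_lt (key1 i hi))
    have hB : ∑ i ∈ Finset.Ico ρ n, max (yσ i + lam) 0 = 0 := by
      apply Finset.sum_eq_zero
      intro i hi
      rw [Finset.mem_Ico] at hi
      exact max_eq_right (key2 i hi.1 hi.2)
    rw [hA, hB, Finset.sum_add_distrib, Finset.sum_const, Finset.card_range,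
      nsmul_eq_mul, add_zero]
    exact hS1
  refine ⟨⟨hxnn, hsum1⟩, ?_⟩
  -- optimality
  intro z ⟨hznn, hzsum⟩
  -- key variational facts
  have hxy : ∀ i, lam ≤ x i - y i := by
    intro i
    have : y i + lam ≤ x i := by rw [hx]; exact le_max_left _ _
    linarith
  have hxy' : ∀ i, 0 < x i → x i - y i = lam := by
    intro i hi
    rw [hx] at hi ⊢
    rcases le_or_gt (y i + lam) 0 with h | h
    · rw [max_eq_right h] at hi; linarith
    · rw [max_eq_left (le_of_lt h)]; ring
  have hinner : 0 ≤ (inner ℝ (z - x) (x - y) : ℝ) := by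
    have hip : (inner ℝ (z - x) (x - y) : ℝ) = ∑ i, (z i - x i) * (x i - y i) := by
      rw [PiLp.inner_apply]
      apply Finset.sum_congr rfl
      intro i _
      simp [PiLp.sub_apply, RCLike.inner_apply, starRingEnd_apply]; ring
    rw [hip]
    have hterm : ∀ i ∈ Finset.univ, (z i - x i) * lam ≤ (z i - x i) * (x i - y i) := by
      intro i _
      rcases eq_or_lt_of_le (hxnn i) with h | h
      · have hz : 0 ≤ z i - x i := by rw [← h]; simpa using hznn i
        exact mul_le_mul_of_nonneg_left (hxy i) hz
      · rw [hxy' i h]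
    have hsum0 : ∑ i, (z i - x i) * lam = 0 := by
      rw [← Finset.sum_mul]
      have : ∑ i, (z i - x i) = 0 := by
        rw [Finset.sum_sub_distrib, hzsum, hsum1]; ring
      rw [this, zero_mul]
    calc (0:ℝ) = ∑ i, (z i - x i) * lam := hsum0.symm
    _ ≤ ∑ i, (z i - x i) * (x i - y i) := Finset.sum_le_sum hterm
  have hdecomp : z - y = (z - x) + (x - y) := by abel
  have hsq : ‖x - y‖ ^ 2 ≤ ‖z - y‖ ^ 2 := by
    rw [hdecomp, norm_add_sq_real]
    have h1 : 0 ≤ ‖z - x‖ ^ 2 := sq_nonneg _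
    linarith
  have := Real.sqrt_le_sqrt hsq
  rwa [Real.sqrt_sq (norm_nonneg _), Real.sqrt_sq (norm_nonneg _)] at this
end

section
/- Let φ : ℝ → ℝ be differentiable with φ(ν̄) = 0, φ'(ν̄) ≠ 0, and suppose there exist δ > 0, c > 0 such that |φ'(ν₁) − φ'(ν₂)| ≤ c|ν₁ − ν₂| for all ν₁ ∈ [ν̄ − δ, ν̄] and ν₂ ∈ [ν̄, ν̄ + δ]. Then the Newton iteration converges locally q-quadratically to ν̄: there is C > 0 and a neighborhood of ν̄ such that |ν_{n+1} − ν̄| ≤ C |νₙ − ν̄|² for all n. -/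
open Set Filter Topology

/-- Local q-quadratic convergence of the one-dimensional Newton method
under a one-sided Lipschitz condition on the derivative across the root. -/
theorem newton_local_quadratic_convergence
    (φ : ℝ → ℝ) (νbar δ c : ℝ)
    (hdiff : Differentiable ℝ φ)
    (hroot : φ νbar = 0)
    (hnd : deriv φ νbar ≠ 0)
    (hδ : 0 < δ) (hc : 0 < c)
    (hlip : ∀ ν₁ ∈ Icc (νbar - δ) νbar, ∀ ν₂ ∈ Icc νbar (νbar + δ),
      |deriv φ ν₁ - deriv φ ν₂| ≤ c * |ν₁ - ν₂|) :
    ∃ C > 0, ∃ ε > 0, ∀ ν₀ : ℝ, |ν₀ - νbar| < ε →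
      ∀ seq : ℕ → ℝ, seq 0 = ν₀ →
        (∀ n, seq (n + 1) = seq n - φ (seq n) / deriv φ (seq n)) →
        ∀ n, |seq (n + 1) - νbar| ≤ C * |seq n - νbar| ^ 2 := by
  set d := |deriv φ νbar| with hd
  have hd0 : 0 < d := abs_pos.mpr hnd
  refine ⟨4 * c / d, by positivity, min δ (d / (4 * c)), lt_min hδ (by positivity), ?_⟩
  set C := 4 * c / d with hC
  set ε := min δ (d / (4 * c)) with hε
  have hεδ : ε ≤ δ := min_le_left _ _
  have hεd : ε ≤ d / (4 * c) := min_le_right _ _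
  have hε0 : 0 < ε := lt_min hδ (by positivity)
  -- Lipschitz bound relative to νbar on the whole interval
  have hL : ∀ ν, |ν - νbar| ≤ δ → |deriv φ ν - deriv φ νbar| ≤ c * |ν - νbar| := by
    intro ν hν
    rw [abs_le] at hν
    rcases le_total ν νbar with h | h
    · exact hlip ν ⟨by linarith, h⟩ νbar ⟨le_refl _, by linarith⟩
    · have := hlip νbar ⟨by linarith, le_refl _⟩ ν ⟨h, by linarith⟩
      rwa [abs_sub_comm, abs_sub_comm νbar ν] at this
  -- lower bound on the derivative near the root
  have hlb : ∀ ν, |ν - νbar| < ε → d / 2 ≤ |deriv φ ν| := by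
    intro ν hν
    have h1 : |deriv φ ν - deriv φ νbar| ≤ c * |ν - νbar| := hL ν (by linarith)
    have h2 : c * |ν - νbar| ≤ c * ε := by nlinarith [abs_nonneg (ν - νbar)]
    have h3 : c * ε ≤ d / 4 := by
      have : c * (d / (4 * c)) = d / 4 := by field_simp
      nlinarith
    have h4 : d - |deriv φ ν| ≤ |deriv φ ν - deriv φ νbar| := by
      have := abs_sub_abs_le_abs_sub (deriv φ νbar) (deriv φ ν)
      rw [abs_sub_comm] at this
      linarith [this]
    linarith
  -- key one-step estimate
  have key : ∀ ν, |ν - νbar| < ε →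
      |ν - φ ν / deriv φ ν - νbar| ≤ C * |ν - νbar| ^ 2 := by
    intro ν hν
    have hlbν : d / 2 ≤ |deriv φ ν| := hlb ν hν
    have hne : deriv φ ν ≠ 0 := by
      intro h; rw [h, abs_zero] at hlbν; linarith
    rcases eq_or_ne ν νbar with rfl | hneq
    · simp [hroot]
    · -- MVT: ∃ ξ strictly between νbar and ν with deriv φ ξ = φ ν / (ν - νbar)
      obtain ⟨ξ, hξmem, hξ⟩ : ∃ ξ, |ξ - νbar| ≤ |ν - νbar| ∧
          deriv φ ξ * (ν - νbar) = φ ν := by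
        rcases lt_or_gt_of_ne hneq with h | h
        · obtain ⟨ξ, hξm, hξs⟩ := exists_deriv_eq_slope φ h
            (hdiff.continuous.continuousOn) (hdiff.differentiableOn)
          refine ⟨ξ, ?_, ?_⟩
          · rw [abs_sub_comm ξ νbar, abs_of_nonneg (by linarith [hξm.2] : (0:ℝ) ≤ νbar - ξ),
              abs_sub_comm ν νbar, abs_of_nonneg (by linarith : (0:ℝ) ≤ νbar - ν)]
            linarith [hξm.1]
          · have hne2 : νbar - ν ≠ 0 := sub_ne_zero.mpr (ne_of_gt h)
            rw [hξs, hroot]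
            field_simp
            ring
        · obtain ⟨ξ, hξm, hξs⟩ := exists_deriv_eq_slope φ h
            (hdiff.continuous.continuousOn) (hdiff.differentiableOn)
          refine ⟨ξ, ?_, ?_⟩
          · rw [abs_of_nonneg (by linarith [hξm.1] : (0:ℝ) ≤ ξ - νbar),
              abs_of_nonneg (by linarith : (0:ℝ) ≤ ν - νbar)]
            linarith [hξm.2]
          · have hne2 : ν - νbar ≠ 0 := sub_ne_zero.mpr (ne_of_gt h)
            rw [hξs, hroot, sub_zero, div_mul_cancel₀ _ hne2]
      have hξδ : |ξ - νbar| ≤ δ := le_trans hξmem (by linarith)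
      have hLν : |deriv φ ν - deriv φ νbar| ≤ c * |ν - νbar| := hL ν (by linarith)
      have hLξ : |deriv φ ξ - deriv φ νbar| ≤ c * |ξ - νbar| := hL ξ hξδ
      have hdiff2 : |deriv φ ν - deriv φ ξ| ≤ 2 * c * |ν - νbar| := by
        have := abs_sub (deriv φ ν - deriv φ νbar) (deriv φ ξ - deriv φ νbar)
        have habs : |deriv φ ν - deriv φ ξ| ≤
            |deriv φ ν - deriv φ νbar| + |deriv φ ξ - deriv φ νbar| := by
          have h := abs_sub_abs_le_abs_sub (deriv φ ν - deriv φ νbar) (deriv φ ξ - deriv φ νbar)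
          calc |deriv φ ν - deriv φ ξ|
              = |(deriv φ ν - deriv φ νbar) - (deriv φ ξ - deriv φ νbar)| := by ring_nf
            _ ≤ _ := abs_sub _ _
        nlinarith [hξmem]
      -- rewrite the Newton error
      have herr : ν - φ ν / deriv φ ν - νbar =
          (ν - νbar) * (deriv φ ν - deriv φ ξ) / deriv φ ν := by
        rw [← hξ]; field_simp; ring
      rw [herr, abs_div, abs_mul]
      rw [div_le_iff₀ (by positivity : (0:ℝ) < |deriv φ ν|)]
      have h1 : |ν - νbar| * |deriv φ ν - deriv φ ξ| ≤ |ν - νbar| * (2 * c * |ν - νbar|) := by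
        exact mul_le_mul_of_nonneg_left hdiff2 (abs_nonneg _)
      have hCd : C * (d / 2) = 2 * c := by rw [hC]; field_simp; ring
      have h2 : C * |ν - νbar| ^ 2 * (d / 2) = |ν - νbar| * (2 * c * |ν - νbar|) := by
        linear_combination hCd * |ν - νbar| ^ 2
      have h3 : C * |ν - νbar| ^ 2 * (d / 2) ≤ C * |ν - νbar| ^ 2 * |deriv φ ν| := by
        have hC0 : (0:ℝ) ≤ C * |ν - νbar| ^ 2 := by positivity
        exact mul_le_mul_of_nonneg_left hlbν hC0
      linarith
  intro ν₀ hν₀ seq hseq0 hrec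
  have hCε : C * ε ≤ 1 := by
    rw [hC]
    have : 4 * c / d * (d / (4 * c)) = 1 := by field_simp
    nlinarith [hε0, (by positivity : (0:ℝ) < 4 * c / d)]
  have hin : ∀ n, |seq n - νbar| < ε := by
    intro n
    induction n with
    | zero => rw [hseq0]; exact hν₀
    | succ k ih =>
      rw [hrec k]
      calc |seq k - φ (seq k) / deriv φ (seq k) - νbar|
          ≤ C * |seq k - νbar| ^ 2 := key _ ih
        _ ≤ C * ε * |seq k - νbar| := by
            have hC0 : (0:ℝ) < C := by positivity
            have h := mul_le_mul_of_nonneg_right ih.le (abs_nonneg (seq k - νbar))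
            nlinarith [mul_le_mul_of_nonneg_left h hC0.le]
        _ ≤ 1 * |seq k - νbar| := by
            exact mul_le_mul_of_nonneg_right hCε (abs_nonneg _)
        _ < ε := by rw [one_mul]; exact ih
  intro n
  rw [hrec n]
  exact key _ (hin n)
end

section
/- Let H be a real Hilbert space, K a convex set in a Banach space U, and for each parameter ν in an interval J let f(ν, ·) : K → ℝ be convex with minimizer set M(ν) ⊆ K, and define δ(ν) = inf_{u ∈ K} f(ν, u). Suppose f(·, u) is differentiable in ν for each u, and that for sequences νₙ → ν and uₙ ∈ M(νₙ) there exist subsequences with uₙ ⇀ u ∈ M(ν) and ∂_ν f(ν + θₙ, uₙ) → ∂_ν f(ν, u) whenever θₙ → 0. Then for all u₁ ∈ M(ν) minimizing ∂_ν f(ν, ·) over M(ν) and u₂ ∈ M(ν): ∂_ν f(ν, u₁) ≤ ∂_ν f(ν, u₂), and the one-sided derivatives of δ at ν satisfy d±δ(ν) = min_{u ∈ M(ν)} (± ∂_ν f(ν, u)) restricted to ± directions respectively; in particular, if ∂_ν f(ν, u) is independent of u ∈ M(ν), then δ is differentiable at ν with δ'(ν) = ∂_ν f(ν, u). -/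
open Set Filter Topology

/-- Weak sequential convergence in a real inner product space. -/
def WeakSeqConv {E : Type*} [NormedAddCommGroup E] [InnerProductSpace ℝ E]
    (x : ℕ → E) (l : E) : Prop :=
  ∀ v : E, Tendsto (fun n => (inner ℝ v (x n) : ℝ)) atTop (𝓝 (inner ℝ v l))

lemma value_function_aux
    {U : Type*} [NormedAddCommGroup U]
    (K : Set U) (J : Set ℝ)
    (f : ℝ → U → ℝ) (fν' : ℝ → U → ℝ) (δv : ℝ → ℝ) (M : ℝ → Set U)
    (hM : ∀ t, M t = {u ∈ K | IsMinOn (f t) K u})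
    (hδv : ∀ t ∈ J, ∀ u ∈ M t, δv t = f t u)
    (hderiv : ∀ (u : U) (t : ℝ), HasDerivAt (fun s => f s u) (fν' t u) t)
    (ν : ℝ) (hνJ : ν ∈ J) (hνnhds : J ∈ 𝓝 ν)
    (hMne : ∀ t ∈ J, (M t).Nonempty)
    (hsub : ∀ νn : ℕ → ℝ, (∀ n, νn n ∈ J) → Tendsto νn atTop (𝓝 ν) →
      ∀ un : ℕ → U, (∀ n, un n ∈ M (νn n)) →
      ∃ φ : ℕ → ℕ, StrictMono φ ∧ ∃ u ∈ M ν,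
        ∀ θn : ℕ → ℝ, Tendsto θn atTop (𝓝 0) →
          Tendsto (fun k => fν' (ν + θn k) (un (φ k))) atTop (𝓝 (fν' ν u))) :
    ∃ up ∈ M ν, (∀ w ∈ M ν, fν' ν up ≤ fν' ν w) ∧
      Tendsto (fun t => (δv (ν + t) - δv ν) / t) (𝓝[>] 0) (𝓝 (fν' ν up)) := by
  classical
  -- a positive radius inside J
  obtain ⟨ε, hε, hball⟩ : ∃ ε > 0, ∀ t : ℝ, |t| < ε → ν + t ∈ J := by
    rcases Metric.mem_nhds_iff.1 hνnhds with ⟨ε, hε, hb⟩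
    exact ⟨ε, hε, fun t ht => hb (by simpa [Real.dist_eq] using ht)⟩
  -- membership facts
  have hMK : ∀ t, ∀ u ∈ M t, u ∈ K ∧ IsMinOn (f t) K u := by
    intro t u hu; rw [hM t] at hu; exact hu
  -- sandwich upper bound
  have upper : ∀ w ∈ M ν, ∀ t : ℝ, ν + t ∈ J → δv (ν + t) - δv ν ≤ f (ν + t) w - f ν w := by
    intro w hw t ht
    obtain ⟨ut, hut⟩ := hMne (ν + t) ht
    have h1 : δv (ν + t) = f (ν + t) ut := hδv _ ht _ hut
    have h2 : δv ν = f ν w := hδv _ hνJ _ hw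
    have h3 : f (ν + t) ut ≤ f (ν + t) w := (hMK _ _ hut).2 (hMK _ _ hw).1
    linarith
  -- sandwich lower bound
  have lower : ∀ w ∈ M ν, ∀ t : ℝ, ν + t ∈ J → ∀ u ∈ M (ν + t),
      f (ν + t) u - f ν u ≤ δv (ν + t) - δv ν := by
    intro w hw t ht u hu
    have h1 : δv (ν + t) = f (ν + t) u := hδv _ ht _ hu
    have h2 : δv ν = f ν w := hδv _ hνJ _ hw
    have h3 : f ν w ≤ f ν u := (hMK _ _ hw).2 (hMK _ _ hu).1
    linarith
  -- mean value theorem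
  have mvt : ∀ (u : U) (t : ℝ), 0 < t →
      ∃ θ ∈ Ioo (0 : ℝ) t, f (ν + t) u - f ν u = fν' (ν + θ) u * t := by
    intro u t ht
    have hlt : ν < ν + t := by linarith
    obtain ⟨c, hc, hceq⟩ := exists_hasDerivAt_eq_slope (fun s => f s u) (fun s => fν' s u)
      hlt (fun x _ => (hderiv u x).continuousAt.continuousWithinAt) (fun x _ => hderiv u x)
    refine ⟨c - ν, ⟨by linarith [hc.1], by linarith [hc.2]⟩, ?_⟩
    have : fν' c u = (f (ν + t) u - f ν u) / t := by simpa using hceq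
    rw [show ν + (c - ν) = c by ring, this]
    field_simp
  -- convergence of upper difference quotients along sequences
  have hupseq : ∀ (w : U) (t : ℕ → ℝ), (∀ n, t n ≠ 0) → Tendsto t atTop (𝓝 0) →
      Tendsto (fun n => (f (ν + t n) w - f ν w) / t n) atTop (𝓝 (fν' ν w)) := by
    intro w t htne ht
    have hd := hasDerivAt_iff_tendsto_slope.1 (hderiv w ν)
    have hmap : Tendsto (fun n => ν + t n) atTop (𝓝[≠] ν) := by
      apply tendsto_nhdsWithin_of_tendsto_nhds_of_eventually_within
      · simpa using (tendsto_const_nhds.add ht)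
      · exact Eventually.of_forall fun n => by
          simp [sub_ne_zero]; intro h; exact htne n (by linarith)
    have := hd.comp hmap
    convert this using 2 with n
    simp [slope, Function.comp, div_eq_inv_mul]
  -- the key sequential lemma
  have key : ∀ t : ℕ → ℝ, (∀ n, t n ∈ Ioo (0 : ℝ) ε) → Tendsto t atTop (𝓝 0) →
      ∃ u ∈ M ν, (∀ w ∈ M ν, fν' ν u ≤ fν' ν w) ∧
        ∃ φ : ℕ → ℕ, Tendsto φ atTop atTop ∧
          Tendsto (fun k => (δv (ν + t (φ k)) - δv ν) / t (φ k)) atTop (𝓝 (fν' ν u)) := by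
    intro t htmem ht0
    have htJ : ∀ n, ν + t n ∈ J := fun n =>
      hball _ (by rw [abs_of_pos (htmem n).1]; exact (htmem n).2)
    choose un hun using fun n => hMne (ν + t n) (htJ n)
    obtain ⟨φ, hφ, u, huM, hconvd⟩ := hsub (fun n => ν + t n) htJ
      (by simpa using (tendsto_const_nhds.add ht0)) un hun
    have htφ : Tendsto (fun k => t (φ k)) atTop (𝓝 0) := ht0.comp hφ.tendsto_atTop
    -- MVT intermediate points
    choose θ hθmem hθeq using fun k => mvt (un (φ k)) (t (φ k)) (htmem (φ k)).1
    have hθ0 : Tendsto θ atTop (𝓝 0) := by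
      refine tendsto_of_tendsto_of_tendsto_of_le_of_le tendsto_const_nhds htφ
        (fun k => (hθmem k).1.le) (fun k => (hθmem k).2.le)
    have hlowlim : Tendsto (fun k => fν' (ν + θ k) (un (φ k))) atTop (𝓝 (fν' ν u)) :=
      hconvd θ hθ0
    -- pointwise sandwich for the quotient
    have hq_lb : ∀ k, fν' (ν + θ k) (un (φ k)) ≤
        (δv (ν + t (φ k)) - δv ν) / t (φ k) := by
      intro k
      have hpos := (htmem (φ k)).1
      have h1 := lower u huM (t (φ k)) (htJ (φ k)) (un (φ k)) (hun (φ k))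
      rw [hθeq k] at h1
      rw [le_div_iff₀ hpos]
      linarith
    have hq_ub : ∀ w ∈ M ν, ∀ k, (δv (ν + t (φ k)) - δv ν) / t (φ k) ≤
        (f (ν + t (φ k)) w - f ν w) / t (φ k) := by
      intro w hw k
      exact div_le_div_of_nonneg_right (upper w hw (t (φ k)) (htJ (φ k))) (htmem (φ k)).1.le
    have hubseq : ∀ w ∈ M ν, Tendsto (fun k => (f (ν + t (φ k)) w - f ν w) / t (φ k))
        atTop (𝓝 (fν' ν w)) := fun w _ =>
      hupseq w (fun k => t (φ k)) (fun k => (htmem (φ k)).1.ne') htφ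
    refine ⟨u, huM, ?_, φ, hφ.tendsto_atTop, ?_⟩
    · intro w hw
      exact le_of_tendsto_of_tendsto' hlowlim (hubseq w hw)
        (fun k => (hq_lb k).trans (hq_ub w hw k))
    · exact tendsto_of_tendsto_of_tendsto_of_le_of_le hlowlim (hubseq u huM)
        hq_lb (hq_ub u huM)
  -- get the minimizer from a fixed sequence
  have hseq0 : Tendsto (fun n : ℕ => ε / (n + 2)) atTop (𝓝 0) := by
    apply Tendsto.div_atTop tendsto_const_nhds
    exact_mod_cast (tendsto_atTop_add_const_right atTop (2:ℝ) tendsto_natCast_atTop_atTop)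
  have hseqmem : ∀ n : ℕ, ε / (n + 2) ∈ Ioo (0 : ℝ) ε := by
    intro n
    constructor
    · positivity
    · rw [div_lt_iff₀ (by positivity)]
      nlinarith [Nat.cast_nonneg (α := ℝ) n]
  obtain ⟨up, hupM, hupmin, -⟩ := key _ hseqmem hseq0
  refine ⟨up, hupM, hupmin, ?_⟩
  -- final convergence via subsequence principle
  apply tendsto_of_subseq_tendsto
  intro x hx
  have hxIoo : ∀ᶠ n in atTop, x n ∈ Ioo (0 : ℝ) ε :=
    hx.eventually (Ioo_mem_nhdsGT_of_mem ⟨le_refl 0, hε⟩)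
  obtain ⟨N, hN⟩ := eventually_atTop.1 hxIoo
  set y : ℕ → ℝ := fun n => x (n + N) with hy
  have hymem : ∀ n, y n ∈ Ioo (0 : ℝ) ε := fun n => hN _ (Nat.le_add_left N n)
  have hy0 : Tendsto y atTop (𝓝 0) :=
    (hx.mono_right nhdsWithin_le_nhds).comp (tendsto_add_atTop_nat N)
  obtain ⟨u, huM, humin, φ, hφ, hqlim⟩ := key y hymem hy0
  have hu_eq : fν' ν u = fν' ν up := le_antisymm (humin up hupM) (hupmin u huM)
  refine ⟨fun k => φ k + N, ?_⟩
  rw [← hu_eq]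
  exact hqlim


/-- Directional differentiability of the value function
`δ(ν) = min_{u ∈ K} f(ν, u)` of a parameterized family of convex problems. The one-sided
derivatives are `d⁺δ(ν) = min_{u ∈ M(ν)} ∂_ν f(ν,u)` and the left difference quotients
converge to `max_{u ∈ M(ν)} ∂_ν f(ν,u)` (i.e. `d⁻δ(ν) = min_{u∈M(ν)} (-∂_ν f(ν,u))`);
if `∂_ν f(ν,·)` is constant on `M(ν)`, then `δ` is differentiable at `ν`. -/
theorem value_function_directional_differentiability
    {U : Type*} [NormedAddCommGroup U] [InnerProductSpace ℝ U] [CompleteSpace U]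
    (K : Set U) (hKne : K.Nonempty) (hK : Convex ℝ K)
    (J : Set ℝ) (hJ : J.OrdConnected)
    (f : ℝ → U → ℝ) (fν' : ℝ → U → ℝ) (δv : ℝ → ℝ) (M : ℝ → Set U)
    (hM : ∀ t, M t = {u ∈ K | IsMinOn (f t) K u})
    (hconv : ∀ t ∈ J, ConvexOn ℝ K (f t))
    (hδv : ∀ t ∈ J, ∀ u ∈ M t, δv t = f t u)
    (hderiv : ∀ (u : U) (t : ℝ), HasDerivAt (fun s => f s u) (fν' t u) t)
    (ν : ℝ) (hνJ : ν ∈ J) (hνnhds : J ∈ 𝓝 ν)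
    (hMne : ∀ t ∈ J, (M t).Nonempty)
    (hsub : ∀ νn : ℕ → ℝ, (∀ n, νn n ∈ J) → Tendsto νn atTop (𝓝 ν) →
      ∀ un : ℕ → U, (∀ n, un n ∈ M (νn n)) →
      ∃ φ : ℕ → ℕ, StrictMono φ ∧ ∃ u ∈ M ν,
        WeakSeqConv (fun k => un (φ k)) u ∧
        ∀ θn : ℕ → ℝ, Tendsto θn atTop (𝓝 0) →
          Tendsto (fun k => fν' (ν + θn k) (un (φ k))) atTop (𝓝 (fν' ν u))) :
    (∀ u₁ ∈ M ν, (∀ w ∈ M ν, fν' ν u₁ ≤ fν' ν w) →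
      ∀ u₂ ∈ M ν, fν' ν u₁ ≤ fν' ν u₂) ∧
    (∃ uplus ∈ M ν, (∀ w ∈ M ν, fν' ν uplus ≤ fν' ν w) ∧
      Tendsto (fun t => (δv (ν + t) - δv ν) / t) (𝓝[>] 0) (𝓝 (fν' ν uplus))) ∧
    (∃ uminus ∈ M ν, (∀ w ∈ M ν, fν' ν w ≤ fν' ν uminus) ∧
      Tendsto (fun t => (δv (ν + t) - δv ν) / t) (𝓝[<] 0) (𝓝 (fν' ν uminus))) ∧
    ((∀ u₁ ∈ M ν, ∀ u₂ ∈ M ν, fν' ν u₁ = fν' ν u₂) →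
      ∀ u ∈ M ν, HasDerivAt δv (fν' ν u) ν) := by
  -- right-sided result
  obtain ⟨uplus, hupM, hupmin, huptend⟩ :=
    value_function_aux K J f fν' δv M hM hδv hderiv ν hνJ hνnhds hMne
      (fun νn h1 h2 un h3 => by
        obtain ⟨φ, hφ, u, huM, -, hθ⟩ := hsub νn h1 h2 un h3
        exact ⟨φ, hφ, u, huM, hθ⟩)
  -- left-sided result via reflection
  have hrefl := value_function_aux K (Neg.neg ⁻¹' J) (fun s u => f (-s) u)
      (fun s u => -fν' (-s) u) (fun s => δv (-s)) (fun s => M (-s))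
      (fun t => hM (-t)) (fun t ht u hu => hδv (-t) ht u hu)
      (by
        intro u t
        have h := (hderiv u (-t)).comp t (hasDerivAt_neg t)
        simp only [mul_neg_one] at h; exact h)
      (-ν) (by simpa using hνJ)
      (by
        have h := (continuous_neg.continuousAt (x := (-ν : ℝ))).preimage_mem_nhds
          (by simpa using hνnhds)
        exact h)
      (fun t ht => hMne (-t) ht)
      (by
        intro νn hνn hνnt un hun
        obtain ⟨φ, hφ, u, huM, -, hθ⟩ := hsub (fun n => -νn n) hνn
          (by simpa using hνnt.neg) un hun
        refine ⟨φ, hφ, u, by simpa using huM, ?_⟩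
        intro θn hθn
        have h := (hθ (fun k => -θn k) (by simpa using hθn.neg)).neg
        have heq : ∀ k, -(-ν + θn k) = ν + -θn k := fun k => by ring
        simp only [neg_neg]
        convert h using 2 with k
        rw [heq])
  obtain ⟨uminus, humM, hummin, humtend⟩ := hrefl
  simp only [neg_neg] at humM hummin humtend
  -- translate the reflected minimality
  have hummax : ∀ w ∈ M ν, fν' ν w ≤ fν' ν uminus := by
    intro w hw
    have := hummin w hw
    linarith
  -- translate the reflected tendsto to the left limit
  have hnegmap : Tendsto (fun s : ℝ => -s) (𝓝[<] (0:ℝ)) (𝓝[>] (0:ℝ)) := by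
    apply tendsto_nhdsWithin_of_tendsto_nhds_of_eventually_within
    · exact (continuous_neg.tendsto' 0 0 neg_zero).mono_left nhdsWithin_le_nhds
    · filter_upwards [self_mem_nhdsWithin] with s hs
      exact neg_pos.2 (mem_Iio.1 hs)
  have humtend' : Tendsto (fun t => (δv (ν + t) - δv ν) / t) (𝓝[<] 0) (𝓝 (fν' ν uminus)) := by
    have h := (humtend.comp hnegmap).neg
    rw [neg_neg] at h
    convert h using 2 with s
    simp only [Function.comp]
    rw [show -ν + -s = -(ν + s) by ring, neg_neg, div_neg, neg_neg]
  refine ⟨fun u₁ _ hmin u₂ h₂ => hmin u₂ h₂,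
    ⟨uplus, hupM, hupmin, huptend⟩,
    ⟨uminus, humM, hummax, humtend'⟩, ?_⟩
  -- differentiability when fν' is constant on M ν
  intro hconst u huM
  have h1 : fν' ν uplus = fν' ν u := hconst _ hupM _ huM
  have h2 : fν' ν uminus = fν' ν u := hconst _ humM _ huM
  rw [hasDerivAt_iff_tendsto_slope, ← nhdsLT_sup_nhdsGT, tendsto_sup]
  have hslope : ∀ s : ℝ, slope δv ν s = (δv (ν + (s - ν)) - δv ν) / (s - ν) := by
    intro s
    simp [slope, div_eq_inv_mul]
  constructor
  · have hmapl : Tendsto (fun s : ℝ => s - ν) (𝓝[<] ν) (𝓝[<] (0:ℝ)) := by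
      apply tendsto_nhdsWithin_of_tendsto_nhds_of_eventually_within
      · have : Tendsto (fun s : ℝ => s - ν) (𝓝 ν) (𝓝 0) := by
          exact (continuous_id.sub continuous_const).tendsto' ν 0 (by simp)
        exact this.mono_left nhdsWithin_le_nhds
      · filter_upwards [self_mem_nhdsWithin] with s hs
        simpa [sub_neg] using mem_Iio.1 hs
    rw [← h2]
    have h := humtend'.comp hmapl
    convert h using 1
    ext s
    exact hslope s
  · have hmapr : Tendsto (fun s : ℝ => s - ν) (𝓝[>] ν) (𝓝[>] (0:ℝ)) := by
      apply tendsto_nhdsWithin_of_tendsto_nhds_of_eventually_within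
      · have : Tendsto (fun s : ℝ => s - ν) (𝓝 ν) (𝓝 0) := by
          exact (continuous_id.sub continuous_const).tendsto' ν 0 (by simp)
        exact this.mono_left nhdsWithin_le_nhds
      · filter_upwards [self_mem_nhdsWithin] with s hs
        simpa [sub_pos] using mem_Ioi.1 hs
    rw [← h1]
    have h := huptend.comp hmapr
    convert h using 1
    ext s
    exact hslope s
end
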